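/- Let H be a Hilbert space, m, n ∈ ℕ, and let f_k = (f_{k1}, …, f_{kn}) ∈ Hⁿ for k = 1, …, m, and g = (g₁, …, g_n) ∈ Hⁿ. Suppose the rank-one sums S_k := Σ_{i=1}^n f_{ki} ⊗ g_i vanish for all k. Then there exist an n × n complex matrix A with all entries of modulus at most 1 and an n × n permutation matrix R such that (R − A) applied entrywise to each vector f_k gives the zero vector of Hⁿ, and A* applied to g gives the zero vector of Hⁿ. -/

import Mathlib

open Matrix

/-- The rank-one operator `x ⊗ y` given by `(x ⊗ y) f = ⟨f, y⟩ x`, where the inner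
product `⟨·,·⟩` is linear in the first argument. -/
noncomputable def rankOne {E F : Type*} [NormedAddCommGroup E] [InnerProductSpace ℂ E]
    [NormedAddCommGroup F] [InnerProductSpace ℂ F] (x : F) (y : E) : E →L[ℂ] F :=
  (innerSL ℂ y).smulRight x

/-!
Let `U ⊆ ℂⁿ` be the range of the analysis operator `h ↦ (⟪g_i, h⟫)_i`. A coefficient vector
`c ⊥ U` satisfies `⟪∑ c_i g_i, h⟫ = ⟪c, (⟪g_i, h⟫)_i⟫ = 0` for all `h`, so `∑ c_i g_i = 0`; a vector
`(⟪g_i, h⟫)_i ∈ U` satisfies `∑ ⟪g_i, h⟫ f_{ki} = S_k h = 0`. Hence one can take `R = 1` and `A` the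
orthogonal projection onto `Uᗮ`: its entries have modulus at most `1`, it is Hermitian with rows in
`Uᗮ`, and `1 - A` is the projection onto `U`.
-/

namespace Submodule

variable {𝕜 ι : Type*} [RCLike 𝕜] [Fintype ι] [DecidableEq ι]

/-- The transpose of the matrix of `K.starProjection` in the standard basis (equivalently, since
the projection is self-adjoint, its entrywise conjugate). -/
noncomputable def projectionMatrix (K : Submodule 𝕜 (EuclideanSpace 𝕜 ι)) : Matrix ι ι 𝕜 :=
  Matrix.of fun j i => K.starProjection (EuclideanSpace.single j 1) i

variable (K : Submodule 𝕜 (EuclideanSpace 𝕜 ι))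

theorem star_starProjection_single_apply (i j : ι) :
    star (K.starProjection (EuclideanSpace.single i 1) j) =
      K.starProjection (EuclideanSpace.single j 1) i := by
  have hcoord (k l : ι) : K.starProjection (EuclideanSpace.single k 1) l =
      inner 𝕜 (EuclideanSpace.single l 1) (K.starProjection (EuclideanSpace.single k 1)) := by
    simp [EuclideanSpace.inner_single_left]
  rw [hcoord, hcoord, ← inner_conj_symm, K.inner_starProjection_left_eq_right, starRingEnd_apply,
    star_star]

theorem projectionMatrix_isHermitian : K.projectionMatrix.IsHermitian :=
  Matrix.ext fun i j => K.star_starProjection_single_apply j i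

theorem norm_projectionMatrix_apply_le (i j : ι) : ‖K.projectionMatrix i j‖ ≤ 1 :=
  calc ‖K.starProjection (EuclideanSpace.single i 1) j‖
      ≤ ‖K.starProjection (EuclideanSpace.single i (1 : 𝕜))‖ := PiLp.norm_apply_le _ _
    _ ≤ ‖EuclideanSpace.single i (1 : 𝕜)‖ := K.norm_starProjection_apply_le _
    _ = 1 := by simp

theorem one_sub_projectionMatrix_orthogonal : 1 - Kᗮ.projectionMatrix = K.projectionMatrix := by
  ext i j
  simp [projectionMatrix, Matrix.one_apply, PiLp.single_apply, eq_comm]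

end Submodule

section AnalysisOperator

variable (𝕜 : Type*) {ι E : Type*} [RCLike 𝕜] [NormedAddCommGroup E]
  [InnerProductSpace 𝕜 E]

noncomputable def analysisOperator (g : ι → E) : E →ₗ[𝕜] EuclideanSpace 𝕜 ι :=
  (WithLp.linearEquiv 2 𝕜 (ι → 𝕜)).symm.toLinearMap ∘ₗ LinearMap.pi fun i => innerₛₗ 𝕜 (g i)

variable {𝕜}

@[simp]
theorem analysisOperator_apply (g : ι → E) (h : E) (i : ι) :
    analysisOperator 𝕜 g h i = inner 𝕜 (g i) h :=
  rfl

variable [Fintype ι]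

theorem inner_analysisOperator (g : ι → E) (v : EuclideanSpace 𝕜 ι) (h : E) :
    inner 𝕜 v (analysisOperator 𝕜 g h) = inner 𝕜 (∑ i, v i • g i) h := by
  simp [PiLp.inner_apply, sum_inner, inner_smul_left, RCLike.inner_apply, mul_comm]

theorem sum_smul_eq_zero_of_mem_orthogonal_range_analysisOperator {g : ι → E}
    {v : EuclideanSpace 𝕜 ι} (hv : v ∈ (LinearMap.range (analysisOperator 𝕜 g))ᗮ) :
    ∑ i, v i • g i = 0 := by
  rw [← inner_self_eq_zero (𝕜 := 𝕜), ← inner_analysisOperator]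
  exact Submodule.inner_left_of_mem_orthogonal (LinearMap.mem_range_self _ _) hv

end AnalysisOperator

theorem sum_smul_eq_zero_of_sum_rankOne_eq_zero {ι E F : Type*} [Fintype ι]
    [NormedAddCommGroup E] [InnerProductSpace ℂ E] [NormedAddCommGroup F] [InnerProductSpace ℂ F]
    {f : ι → F} {g : ι → E} (hS : ∑ i, rankOne (f i) (g i) = 0) {v : EuclideanSpace ℂ ι}
    (hv : v ∈ LinearMap.range (analysisOperator ℂ g)) :
    ∑ i, v i • f i = 0 := by
  obtain ⟨h, rfl⟩ := hv
  simpa [rankOne] using congrArg (· h) hS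

/-- If the rank-one sums `S_k = ∑ i, f_{k i} ⊗ g_i` all vanish, then there are a matrix
`A` with entries of modulus at most `1` and a permutation matrix `R` (given by a
permutation `σ`) such that `(R − A) f_k = 0` for all `k` and `A* g = 0`, where matrices
act on vectors in `Hⁿ` by `(M v)_j = ∑ i, M j i • v i`. -/
theorem exists_matrix_perm_of_rankOne_sum_eq_zero {H : Type*} [NormedAddCommGroup H]
    [InnerProductSpace ℂ H] (m n : ℕ) (f : Fin m → Fin n → H) (g : Fin n → H)
    (hS : ∀ k, ∑ i, rankOne (f k i) (g i) = 0) :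
    ∃ (A : Matrix (Fin n) (Fin n) ℂ) (σ : Equiv.Perm (Fin n)),
      (∀ i j, ‖A i j‖ ≤ 1) ∧
      (∀ k j, ∑ i, ((σ.permMatrix ℂ - A) j i) • f k i = 0) ∧
      (∀ j, ∑ i, (Aᴴ j i) • g i = 0) := by
  set U := LinearMap.range (analysisOperator ℂ g)
  refine ⟨Uᗮ.projectionMatrix, 1, Uᗮ.norm_projectionMatrix_apply_le, fun k j => ?_, fun j => ?_⟩
  · rw [permMatrix_one, U.one_sub_projectionMatrix_orthogonal]
    exact sum_smul_eq_zero_of_sum_rankOne_eq_zero (hS k) (U.starProjection_apply_mem _)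
  · rw [Uᗮ.projectionMatrix_isHermitian.eq]
    exact sum_smul_eq_zero_of_mem_orthogonal_range_analysisOperator
      (Uᗮ.starProjection_apply_mem _)
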